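/- Every cactus graph H has a set S ⊆ V(H) such that the induced subgraph H[S] is a single vertex, a single edge, or a cycle, and every automorphism π of H satisfies π(S) = S. -/

import Mathlib

open SimpleGraph

/-- The number of walks of length `n` from `u` to `v` in `G`. -/
noncomputable def walkCount {V : Type*} (G : SimpleGraph V) (n : ℕ) (u v : V) : ℕ :=
  Nat.card {w : G.Walk u v // w.length = n}

/-- The degree of a vertex, as the cardinality of its neighbour set. -/
noncomputable def vdeg {V : Type*} (G : SimpleGraph V) (v : V) : ℕ :=
  (G.neighborSet v).ncard

/-- An involution of a graph: an automorphism of order two. -/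
def IsInvolution {V : Type*} (G : SimpleGraph V) (σ : G ≃g G) : Prop :=
  σ.toEquiv ≠ Equiv.refl V ∧ ∀ v, σ (σ v) = v

/-- A graph is involution-free if it has no involution. -/
def InvolutionFree {V : Type*} (G : SimpleGraph V) : Prop :=
  ¬ ∃ σ : G ≃g G, IsInvolution G σ

/-- A rooted graph `(G, x)` is involution-free if `G` has no involution fixing `x`. -/
def RootedInvolutionFree {V : Type*} (G : SimpleGraph V) (x : V) : Prop :=
  ¬ ∃ σ : G ≃g G, IsInvolution G σ ∧ σ x = x

/-- Every edge of `G` belongs to at most one cycle: any two cycles sharing an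
edge have the same edge set. -/
def EdgesOnAtMostOneCycle {V : Type*} (G : SimpleGraph V) : Prop :=
  ∀ (a b : V) (c : G.Walk a a) (d : G.Walk b b), c.IsCycle → d.IsCycle →
    ∀ e, e ∈ c.edges → e ∈ d.edges → ∀ f, f ∈ c.edges ↔ f ∈ d.edges

/-- A cactus graph: a connected simple graph in which every edge belongs to at
most one cycle. -/
def IsCactus {V : Type*} (G : SimpleGraph V) : Prop :=
  G.Connected ∧ EdgesOnAtMostOneCycle G

/-- The distance from a vertex to a set of vertices. -/
noncomputable def setDist {V : Type*} (G : SimpleGraph V) (v : V) (S : Set V) : ℕ :=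
  sInf (G.dist v '' S)

/-- A hardness gadget `(β, s, t, O, i, K, k, w)` in a graph `G`. -/
structure HardnessGadget {V : Type*} (G : SimpleGraph V) where
  β : ℕ
  s : V
  t : V
  i : V
  O : Set V
  K : Set V
  k : V → ℕ
  w : V → V
  β_pos : 0 < β
  i_not_in_O : i ∉ O
  i_not_in_K : i ∉ K
  O_disj_K : Disjoint O K
  nbhd_partition : O ∪ {i} ∪ K = G.neighborSet s
  O_odd : Odd O.ncard
  s_unique : ∀ o ∈ O, ∀ y ∈ O ∪ {i}, ∀ z : V,
    (G.Adj z o ∧ G.Adj z y ∧ Odd (walkCount G β z t)) ↔ z = s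
  i_t_even : Even (walkCount G (1 + β) i t)
  k_pos : ∀ u ∈ K, 0 < k u
  w_walks : ∀ u ∈ K, Even (walkCount G (k u) (w u) u) ∧
    ∀ y ∈ O ∪ {i}, Odd (walkCount G (k u) (w u) y)

/-- The distance requirements of a hardness gadget with respect to a vertex `v`. -/
def HardnessGadget.SatisfiesDistReq {V : Type*} {G : SimpleGraph V}
    (Γ : HardnessGadget G) (v : V) : Prop :=
  ((setDist G v (Γ.O ∪ {Γ.i}) : ℤ) + (G.dist v Γ.t : ℤ) > (Γ.β : ℤ) - 1) ∧
  ∀ u ∈ Γ.K, ((G.dist v (Γ.w u) : ℤ) + (setDist G v (Γ.O ∪ {Γ.i, u}) : ℤ)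
      > (Γ.k u : ℤ) - 2)

/-- `P` is the unique shortest path between its endpoints. -/
def IsUniqueShortestPath {V : Type*} (G : SimpleGraph V) {u v : V}
    (P : G.Walk u v) : Prop :=
  P.IsPath ∧ ∀ Q : G.Walk u v, Q.IsPath → Q.length ≤ P.length → Q = P

/-- The graph `G` contains a cycle. -/
def HasCycle {V : Type*} (G : SimpleGraph V) : Prop :=
  ∃ (a : V) (c : G.Walk a a), c.IsCycle

/-- The edge `e` lies on a 4-cycle of `G`. -/
def EdgeOnFourCycle {V : Type*} (G : SimpleGraph V) (e : Sym2 V) : Prop :=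
  ∃ (a : V) (c : G.Walk a a), c.IsCycle ∧ c.length = 4 ∧ e ∈ c.edges

/-- An unbristled mosaic: the one-vertex rooted graph, or a rooted cactus graph
that is a union of 4-cycles. -/
def IsUnbristledMosaic {V : Type*} (G : SimpleGraph V) (x : V) : Prop :=
  (∀ v : V, v = x) ∨ (IsCactus G ∧ ∀ e ∈ G.edgeSet, EdgeOnFourCycle G e)

/-- A mosaic: a rooted graph obtained from an unbristled mosaic on a vertex
subset `V'` containing the root by attaching a perfect matching ("bristles")
between the remaining vertices and a subset of `V'`. -/
def IsMosaic {V : Type*} (G : SimpleGraph V) (x : V) : Prop :=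
  ∃ (V' : Set V) (hx : x ∈ V'),
    IsUnbristledMosaic (G.induce V') ⟨x, hx⟩ ∧
    (∀ v, v ∉ V' → ∀ u, G.Adj v u → u ∈ V') ∧
    (∀ v, v ∉ V' → ∃! u, G.Adj v u) ∧
    (∀ u v₁ v₂, v₁ ∉ V' → v₂ ∉ V' → G.Adj u v₁ → G.Adj u v₂ → v₁ = v₂)

/-- A proper mosaic: a mosaic containing at least one cycle. -/
def IsProperMosaic {V : Type*} (G : SimpleGraph V) (x : V) : Prop :=
  IsMosaic G x ∧ HasCycle G

/-- A shortcut in the rooted graph `(G, x)`: a pair of distinct odd-degree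
vertices of degree at least 3 with a unique shortest path between them that
avoids `x`. -/
def HasShortcut {V : Type*} (G : SimpleGraph V) (x : V) : Prop :=
  ∃ v₁ v₂ : V, v₁ ≠ v₂ ∧ Odd (vdeg G v₁) ∧ Odd (vdeg G v₂) ∧
    3 ≤ vdeg G v₁ ∧ 3 ≤ vdeg G v₂ ∧
    ∃ P : G.Walk v₁ v₂, IsUniqueShortestPath G P ∧ x ∉ P.support

/-- A 2,3-path `(P, v₂, v₃)` in a rooted graph: `v₂` and `v₃` lie on a common
cycle, have degrees 2 and 3 respectively, and the extensions of `P` by `v₂`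
and by `v₃` are unique shortest paths from the root. -/
def Is23Path {V : Type*} (G : SimpleGraph V) {x z : V} (P : G.Walk x z)
    (v₂ v₃ : V) : Prop :=
  (∃ (a : V) (c : G.Walk a a), c.IsCycle ∧ v₂ ∈ c.support ∧ v₃ ∈ c.support) ∧
  vdeg G v₂ = 2 ∧ vdeg G v₃ = 3 ∧
  (∃ h₂ : G.Adj z v₂, IsUniqueShortestPath G (P.concat h₂)) ∧
  (∃ h₃ : G.Adj z v₃, IsUniqueShortestPath G (P.concat h₃))

/-- A partial hardness gadget `(s, i, O, P)` in the rooted graph `(G, x)`. -/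
def IsPartialHardnessGadget {V : Type*} (G : SimpleGraph V) (x s i : V)
    (O : Set V) (P : G.Walk x i) : Prop :=
  i ∉ O ∧ insert i O = G.neighborSet s ∧ Odd O.ncard ∧
  IsUniqueShortestPath G P ∧
  ∃ his : G.Adj i s, IsUniqueShortestPath G (P.concat his) ∧
    ∀ o ∈ O, ∃ hso : G.Adj s o, IsUniqueShortestPath G ((P.concat his).concat hso)

/-- `C` is (the vertex set of) a connected component of `G - {x}`, i.e. of the
split of `G` at `x`; the corresponding member of the split is the subgraph of
`G` induced by `C ∪ {x}`. -/
def IsSplitComponent {V : Type*} (G : SimpleGraph V) (x : V) (C : Set V) : Prop :=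
  x ∉ C ∧ C.Nonempty ∧ (G.induce C).Connected ∧
  ∀ u ∈ C, ∀ v : V, G.Adj u v → v ≠ x → v ∈ C

/-- `x` is a cut vertex: `G - {x}` has at least two connected components. -/
def IsCutVertex {V : Type*} (G : SimpleGraph V) (x : V) : Prop :=
  ∃ C₁ C₂ : Set V, IsSplitComponent G x C₁ ∧ IsSplitComponent G x C₂ ∧ C₁ ≠ C₂

/-!
Prune the cactus: delete its leaves and, from every end cycle (a cycle all of whose vertices but
one, its attachment vertex, have degree two), all vertices other than the attachment vertex. The
deleted set is invariant under automorphisms, and no path between two surviving vertices passes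
through a deleted one, so the survivors induce a smaller cactus; an invariant vertex, edge or cycle
of it is one of the whole graph. Something is always deleted, since a cactus with at least two
vertices has an end block avoiding any given vertex `ρ`: take a cycle, and unless it already is an
end cycle avoiding `ρ`, descend into the branch hanging off it at a vertex of degree at least
three whose branch misses `ρ`. Everything is deleted only when the cactus is a single vertex, an
edge or a cycle, and then the whole vertex set does.
-/

namespace SimpleGraph

variable {V V' : Type*} {G : SimpleGraph V} {G' : SimpleGraph V'}

lemma Subgraph.ncard_neighborSet_le_vdeg [Finite V] (H : G.Subgraph) (v : V) :
    (H.neighborSet v).ncard ≤ vdeg G v :=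
  Set.ncard_le_ncard (H.neighborSet_subset v)

lemma vdeg_eq_degree (v : V) [Fintype (G.neighborSet v)] : vdeg G v = G.degree v := by
  rw [vdeg, ← Nat.card_coe_set_eq, Nat.card_eq_fintype_card, card_neighborSet_eq_degree]

lemma Iso.vdeg_apply (π : G ≃g G') (v : V) : vdeg G' (π v) = vdeg G v := by
  unfold vdeg
  rw [← Set.ncard_image_of_injective _ π.injective]
  congr 1
  ext u
  refine ⟨fun hu => ⟨π.symm u, ?_, π.apply_symm_apply u⟩, ?_⟩
  · simpa [← π.symm.map_adj_iff] using hu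
  · rintro ⟨w, hw, rfl⟩
    exact π.map_adj_iff.mpr hw

lemma vdeg_induce_of_neighborSet_subset {T : Set V} {v : V} (hv : v ∈ T)
    (h : G.neighborSet v ⊆ T) : vdeg (G.induce T) ⟨v, hv⟩ = vdeg G v := by
  unfold vdeg
  rw [← Set.ncard_image_of_injective _ Subtype.val_injective]
  congr 1
  ext u
  refine ⟨?_, fun hu => ⟨⟨u, h hu⟩, hu, rfl⟩⟩
  rintro ⟨w, hw, rfl⟩
  exact hw

lemma neighborSet_eq_singleton_of_vdeg_le_one [Finite V] {u v : V} (hd : vdeg G v ≤ 1)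
    (h : G.Adj v u) : G.neighborSet v = {u} :=
  (Set.eq_of_subset_of_ncard_le (Set.singleton_subset_iff.mpr h)
    (by rw [Set.ncard_singleton]; exact hd) (Set.toFinite _)).symm

lemma Walk.IsCycle.two_le_vdeg [Finite V] {a v : V} {c : G.Walk a a} (hc : c.IsCycle)
    (hv : v ∈ c.support) : 2 ≤ vdeg G v :=
  (hc.ncard_neighborSet_toSubgraph_eq_two hv).ge.trans (c.toSubgraph.ncard_neighborSet_le_vdeg v)

lemma Walk.IsCycle.neighborSet_subset_of_vdeg_eq_two [Finite V] {a v : V} {c : G.Walk a a}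
    (hc : c.IsCycle) (hv : v ∈ c.support) (hd : vdeg G v = 2) :
    G.neighborSet v ⊆ {w | w ∈ c.support} := by
  have heq : c.toSubgraph.neighborSet v = G.neighborSet v :=
    Set.eq_of_subset_of_ncard_le (c.toSubgraph.neighborSet_subset v)
      (by rw [hc.ncard_neighborSet_toSubgraph_eq_two hv]; exact hd.le) (Set.toFinite _)
  rw [← heq, ← c.verts_toSubgraph]
  exact c.toSubgraph.neighborSet_subset_verts v

lemma Walk.IsPath.two_le_vdeg [Finite V] {u v w : V} {p : G.Walk u w} (hp : p.IsPath)
    (hv : v ∈ p.support) (hvu : v ≠ u) (hvw : v ≠ w) : 2 ≤ vdeg G v := by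
  obtain ⟨i, rfl, hi⟩ := p.mem_support_iff_exists_getVert.mp hv
  have hi0 : i ≠ 0 := by rintro rfl; exact hvu p.getVert_zero
  have hil : i < p.length := hi.lt_of_ne (by rintro rfl; exact hvw p.getVert_length)
  exact (hp.ncard_neighborSet_toSubgraph_internal_eq_two hi0 hil).ge.trans
    (p.toSubgraph.ncard_neighborSet_le_vdeg _)

lemma IsTree.exists_ne_vdeg_le_one [Finite V] [Nontrivial V] (hG : G.IsTree) (ρ : V) :
    ∃ v ≠ ρ, vdeg G v ≤ 1 := by
  classical
  have := Fintype.ofFinite V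
  obtain ⟨u, v, huv, hu, hv⟩ := hG.exists_ne_and_degree_eq_one
  obtain rfl | hu' := eq_or_ne u ρ
  · exact ⟨v, huv.symm, (vdeg_eq_degree v).trans_le hv.le⟩
  · exact ⟨u, hu', (vdeg_eq_degree u).trans_le hu.le⟩

lemma Walk.IsCycle.exists_mem_support_ne {a : V} {c : G.Walk a a} (hc : c.IsCycle) (z : V) :
    ∃ w ∈ c.support, w ≠ z := by
  obtain rfl | hz := eq_or_ne a z
  · exact ⟨c.snd, List.mem_of_mem_tail (c.snd_mem_tail_support hc.not_nil),
      (c.adj_snd hc.not_nil).ne.symm⟩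
  · exact ⟨a, c.start_mem_support, hz⟩

lemma Walk.IsPath.start_notMem_support_tail {u v : V} {p : G.Walk u v} (hp : p.IsPath) :
    u ∉ p.support.tail :=
  (List.nodup_cons.mp (p.cons_tail_support ▸ hp.support_nodup)).1

lemma Walk.IsPath.eq_of_mem_support_takeUntil_of_mem_support_dropUntil [DecidableEq V]
    {u v w x : V} {p : G.Walk u w} (hp : p.IsPath) (hv : v ∈ p.support)
    (hx₁ : x ∈ (p.takeUntil v hv).support) (hx₂ : x ∈ (p.dropUntil v hv).support) : x = v := by
  have hnd := hp.support_nodup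
  rw [← p.take_spec hv, Walk.support_append, List.nodup_append] at hnd
  rw [← (p.dropUntil v hv).cons_tail_support, List.mem_cons] at hx₂
  exact hx₂.resolve_right fun h => hnd.2.2 x hx₁ x h rfl

lemma Walk.mem_support_of_mem_of_notMem {D : Set V} {z : V}
    (hD : ∀ v ∈ D, ∀ u, G.Adj v u → u ∈ D ∨ u = z) {u w : V} (p : G.Walk u w) (hu : u ∈ D)
    (hw : w ∉ D) : z ∈ p.support := by
  obtain ⟨d, hd, hfst, hsnd⟩ := p.exists_boundary_dart D hu hw
  obtain h | rfl := hD _ hfst _ d.adj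
  · exact absurd h hsnd
  · exact p.dart_snd_mem_support_of_mem_darts hd

lemma Preconnected.eq_univ_of_adj_closed (hG : G.Preconnected) {T : Set V} {v : V}
    (hv : v ∈ T) (hT : ∀ u ∈ T, ∀ w, G.Adj u w → w ∈ T) : T = Set.univ := by
  refine Set.eq_univ_of_forall fun w => by_contra fun hw => ?_
  obtain ⟨d, -, hfst, hsnd⟩ := (hG v w).some.exists_boundary_dart T hv hw
  exact hsnd (hT _ hfst _ d.adj)

lemma induce_connected_of_forall_exists_walk {T : Set V} {x : V} (hx : x ∈ T)
    (h : ∀ v ∈ T, ∃ p : G.Walk v x, ∀ w ∈ p.support, w ∈ T) : (G.induce T).Connected := by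
  rw [connected_iff_exists_forall_reachable]
  refine ⟨⟨x, hx⟩, fun ⟨v, hv⟩ => ?_⟩
  obtain ⟨p, hp⟩ := h v hv
  exact (p.induce T hp).reachable.symm

end SimpleGraph

namespace EdgesOnAtMostOneCycle

variable {V V' : Type*} {G : SimpleGraph V} {G' : SimpleGraph V'}

lemma comap (f : G' ↪g G) (hG : EdgesOnAtMostOneCycle G) : EdgesOnAtMostOneCycle G' := by
  intro a b c d hc hd e hec hed e'
  have hmem : ∀ {x : V'} (p : G'.Walk x x) (e : Sym2 V'),
      e ∈ p.edges ↔ e.map f ∈ (p.map f.toHom).edges := fun p e => by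
    rw [Walk.edges_map]
    exact (List.mem_map_of_injective (Sym2.map.injective f.injective)).symm
  rw [hmem c, hmem d]
  exact hG _ _ _ _ (hc.map f.injective) (hd.map f.injective) _ ((hmem c e).mp hec)
    ((hmem d e).mp hed) _

/-- Together with an arc of `c`, such a path forms a cycle sharing an edge with `c`. -/
theorem mem_edges_of_isPath (hG : EdgesOnAtMostOneCycle G) {a x y : V} {c : G.Walk a a}
    (hc : c.IsCycle) (hx : x ∈ c.support) (hy : y ∈ c.support) {p : G.Walk x y}
    (hp : p.IsPath) (hmeet : ∀ w ∈ p.support, w ∈ c.support → w = x ∨ w = y) {e : Sym2 V}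
    (he : e ∈ p.edges) : e ∈ c.edges := by
  classical
  obtain rfl | hxy := eq_or_ne x y
  · simp [Walk.eq_nil_iff_nil.mpr (Walk.isPath_iff_nil.mp hp)] at he
  have hy' : y ∈ (c.rotate x hx).support := (c.mem_support_rotate_iff x hx).mpr hy
  set q := (c.rotate x hx).takeUntil y hy'
  have hq : q.IsPath := (hc.rotate hx).isPath_takeUntil hy'
  have hqc : ∀ f ∈ q.edges, f ∈ c.edges := fun f hf =>
    (c.rotate_edges x hx).mem_iff.mp ((c.rotate x hx).edges_takeUntil_subset_edges hy' hf)
  have hqs : ∀ w ∈ q.support, w ∈ c.support := fun w hw =>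
    (c.mem_support_rotate_iff x hx).mp ((c.rotate x hx).support_takeUntil_subset_support hy' hw)
  by_contra hec
  have hcyc : (p.append q.reverse).IsCycle := by
    refine hp.isCycle_append hq.reverse (fun w hwp hwq => ?_) ?_
    · have hwq' : w ∈ q.support := by
        simpa using List.mem_of_mem_tail hwq
      obtain rfl | rfl := hmeet w (List.mem_of_mem_tail hwp) (hqs w hwq')
      · exact hp.start_notMem_support_tail hwp
      · exact hq.reverse.start_notMem_support_tail hwq
    · by_contra! hlen
      rw [Walk.length_reverse] at hlen
      exact hec (hqc e (Walk.eq_of_length_le_one hlen.1 hlen.2 ▸ he))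
  have hq_edge : s(x, q.snd) ∈ q.edges := q.mk_start_snd_mem_edges (Walk.not_nil_of_ne hxy)
  refine hec ((hG _ _ c _ hc hcyc _ (hqc _ hq_edge) ?_ e).mpr ?_)
  · simp [Walk.edges_append, hq_edge]
  · simp [Walk.edges_append, he]

theorem adj_iff_mem_edges (hG : EdgesOnAtMostOneCycle G) {a u v : V} {c : G.Walk a a}
    (hc : c.IsCycle) (hu : u ∈ c.support) (hv : v ∈ c.support) :
    G.Adj u v ↔ s(u, v) ∈ c.edges := by
  refine ⟨fun h => hG.mem_edges_of_isPath hc hu hv (p := h.toWalk) ?_ ?_ (by simp),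
    c.adj_of_mem_edges⟩
  · simp [h.ne]
  · simp

end EdgesOnAtMostOneCycle

/-- For `x` on the cycle `c` of a cactus: `x` together with everything hanging off `c` at `x`. -/
def SimpleGraph.Walk.branch {V : Type*} {G : SimpleGraph V} {a : V} (c : G.Walk a a) (x : V) :
    Set V :=
  {v | ∃ q : G.Walk v x, ∀ w ∈ q.support, w ∈ c.support → w = x}

namespace SimpleGraph.Walk

variable {V : Type*} {G : SimpleGraph V} {a x : V} {c : G.Walk a a}

lemma mem_branch_self : x ∈ c.branch x :=
  ⟨.nil, by simp⟩

lemma eq_of_mem_branch {v : V} (hv : v ∈ c.branch x) (hvc : v ∈ c.support) : v = x :=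
  hv.elim fun q hq => hq v q.start_mem_support hvc

lemma induce_branch_connected : (G.induce (c.branch x)).Connected := by
  classical
  refine induce_connected_of_forall_exists_walk mem_branch_self fun v ⟨q, hq⟩ =>
    ⟨q, fun w hw => ⟨q.dropUntil w hw, fun w' hw' => hq w' ?_⟩⟩
  exact q.support_dropUntil_subset_support hw hw'

end SimpleGraph.Walk

namespace EdgesOnAtMostOneCycle

variable {V : Type*} {G : SimpleGraph V} {a x : V} {c : G.Walk a a}

theorem mem_branch_of_adj (hG : EdgesOnAtMostOneCycle G) (hc : c.IsCycle)
    (hx : x ∈ c.support) {u v : V} (hv : v ∈ c.branch x) (hvx : v ≠ x) (hvu : G.Adj v u) :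
    u ∈ c.branch x := by
  classical
  obtain ⟨q, hq⟩ := hv
  by_cases hu : u ∈ c.support → u = x
  · exact ⟨.cons hvu.symm q, by simpa using ⟨hu, hq⟩⟩
  obtain ⟨huc, hux⟩ := Classical.not_imp.mp hu
  have hvc : v ∉ c.support := fun h => hvx (hq v q.start_mem_support h)
  have hq' : ∀ w ∈ q.bypass.support, w ∈ c.support → w = x :=
    fun w hw => hq w (q.support_bypass_subset_support hw)
  have hpath : (Walk.cons hvu.symm q.bypass).IsPath :=
    q.bypass_isPath.cons fun h => hux (hq' u h huc)
  have hedge := hG.mem_edges_of_isPath hc huc hx hpath (e := s(u, v)) ?_ (by simp)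
  · exact absurd (c.snd_mem_support_of_mem_edges hedge) hvc
  · simp only [Walk.support_cons, List.mem_cons]
    rintro w (rfl | hw) hwc
    exacts [.inl rfl, .inr (hq' w hw hwc)]

theorem disjoint_branch (hG : EdgesOnAtMostOneCycle G) (hc : c.IsCycle) {y : V}
    (hx : x ∈ c.support) (hy : y ∈ c.support) (hxy : x ≠ y) :
    Disjoint (c.branch x) (c.branch y) := by
  refine Set.disjoint_left.mpr fun v hvx ⟨q, hq⟩ => hxy (hq x ?_ hx)
  refine q.mem_support_of_mem_of_notMem (D := c.branch x \ {x}) ?_ ⟨hvx, ?_⟩ ?_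
  · rintro w ⟨hw, hwx⟩ u hwu
    by_cases hux : u = x
    · exact .inr hux
    · exact .inl ⟨hG.mem_branch_of_adj hc hx hw hwx hwu, hux⟩
  · rintro rfl
    exact hxy (Walk.eq_of_mem_branch ⟨q, hq⟩ hx)
  · exact fun h => hxy (Walk.eq_of_mem_branch h.1 hy).symm

lemma exists_adj_notMem_support [Finite V] (hG : EdgesOnAtMostOneCycle G)
    (hc : c.IsCycle) (hx : x ∈ c.support) (h3 : 3 ≤ vdeg G x) :
    ∃ t, G.Adj x t ∧ t ∉ c.support := by
  obtain ⟨t, ht, htc⟩ := Set.exists_mem_notMem_of_ncard_lt_ncard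
    (s := c.toSubgraph.neighborSet x) (t := G.neighborSet x)
    (by rw [hc.ncard_neighborSet_toSubgraph_eq_two hx]; exact h3)
  exact ⟨t, ht, fun htc' =>
    htc (Walk.adj_toSubgraph_iff_mem_edges.mpr ((hG.adj_iff_mem_edges hc hx htc').mp ht))⟩

end EdgesOnAtMostOneCycle

/-- Such a cycle is attached to the rest of the graph only through `z`. -/
def IsEndCycle {V : Type*} (G : SimpleGraph V) {a : V} (c : G.Walk a a) (z : V) : Prop :=
  c.IsCycle ∧ ∀ w ∈ c.support, w ≠ z → vdeg G w = 2

/-- A leaf block of `G` that does not contain `ρ`, except possibly as its cut vertex. -/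
def HasEndBlockAvoiding {V : Type*} (G : SimpleGraph V) (ρ : V) : Prop :=
  (∃ v ≠ ρ, vdeg G v ≤ 1) ∨
    ∃ (a z : V) (c : G.Walk a a), IsEndCycle G c z ∧ ∀ w ∈ c.support, w ≠ z → w ≠ ρ

section EndBlocks

variable {V : Type*} {G : SimpleGraph V}

lemma HasEndBlockAvoiding.of_induce {T : Set V} {x ρ : V} (hx : x ∈ T)
    (hT : ∀ v ∈ T, v ≠ x → G.neighborSet v ⊆ T) (hρ : ρ ∈ T → ρ = x)
    (h : HasEndBlockAvoiding (G.induce T) ⟨x, hx⟩) : HasEndBlockAvoiding G ρ := by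
  have hdeg : ∀ v : T, v ≠ ⟨x, hx⟩ → vdeg (G.induce T) v = vdeg G v ∧ (v : V) ≠ ρ := by
    intro v hv
    have hvx : (v : V) ≠ x := fun h => hv (Subtype.ext h)
    exact ⟨vdeg_induce_of_neighborSet_subset v.2 (hT v v.2 hvx),
      fun h => hvx (h ▸ hρ (h ▸ v.2))⟩
  rcases h with ⟨v, hv, hdv⟩ | ⟨a, z, c, ⟨hc, hc2⟩, hcρ⟩
  · exact .inl ⟨v, (hdeg v hv).2, (hdeg v hv).1 ▸ hdv⟩
  · have key : ∀ w ∈ (c.map (Embedding.induce T).toHom).support, w ≠ z →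
        vdeg G w = 2 ∧ w ≠ ρ := by
      simp only [Walk.support_map, List.mem_map]
      rintro _ ⟨w, hw, rfl⟩ hwz
      have hwz' : w ≠ z := fun h => hwz (congrArg _ h)
      have := hdeg w (hcρ w hw hwz')
      exact ⟨this.1 ▸ hc2 w hw hwz', this.2⟩
    exact .inr ⟨a, z, _, ⟨hc.map (Embedding.induce (G := G) T).injective,
      fun w hw hwz => (key w hw hwz).1⟩,
      fun w hw hwz => (key w hw hwz).2⟩

lemma SimpleGraph.Walk.IsCycle.exists_isEndCycle_of_subsingleton [Finite V] {a : V}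
    {c : G.Walk a a} (hc : c.IsCycle) {ρ : V}
    (h : {w | w ∈ c.support ∧ (3 ≤ vdeg G w ∨ ρ ∈ c.branch w)}.Subsingleton) :
    ∃ z, IsEndCycle G c z ∧ ∀ w ∈ c.support, w ≠ z → w ≠ ρ := by
  obtain ⟨z, hz⟩ : ∃ z, ∀ w ∈ c.support, 3 ≤ vdeg G w ∨ ρ ∈ c.branch w → w = z := by
    by_cases hne : ∃ z ∈ c.support, 3 ≤ vdeg G z ∨ ρ ∈ c.branch z
    · obtain ⟨z, hz⟩ := hne
      exact ⟨z, fun w hw hw' => h ⟨hw, hw'⟩ hz⟩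
    · exact ⟨a, fun w hw hw' => absurd ⟨w, hw, hw'⟩ hne⟩
  have hz' : ∀ w ∈ c.support, w ≠ z → vdeg G w < 3 ∧ ρ ∉ c.branch w := fun w hw hwz => by
    simpa [not_or] using mt (hz w hw) hwz
  refine ⟨z, ⟨hc, fun w hw hwz => ?_⟩, fun w hw hwz hwρ => ?_⟩
  · have := hc.two_le_vdeg hw
    have := (hz' w hw hwz).1
    omega
  · exact (hz' w hw hwz).2 (hwρ ▸ Walk.mem_branch_self)

theorem IsCactus.hasEndBlockAvoiding [Finite V] [Nontrivial V] (hG : IsCactus G) (ρ : V) :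
    HasEndBlockAvoiding G ρ := by
  induction hn : Nat.card V using Nat.strong_induction_on generalizing V with
  | _ n ih =>
  classical
  by_cases hacyc : G.IsAcyclic
  · exact .inl (IsTree.exists_ne_vdeg_le_one ⟨hG.1, hacyc⟩ ρ)
  obtain ⟨a, c, hc⟩ : ∃ (a : V) (c : G.Walk a a), c.IsCycle := by simpa [IsAcyclic] using hacyc
  by_cases hsub : {w | w ∈ c.support ∧ (3 ≤ vdeg G w ∨ ρ ∈ c.branch w)}.Subsingleton
  · obtain ⟨z, hz, hzρ⟩ := hc.exists_isEndCycle_of_subsingleton hsub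
    exact .inr ⟨a, z, c, hz, hzρ⟩
  -- `ρ` lies in at most one branch, so some vertex of degree `≥ 3` on `c` has a branch avoiding it
  obtain ⟨x, hx, hx3, hρx⟩ : ∃ x ∈ c.support, 3 ≤ vdeg G x ∧ ρ ∉ c.branch x := by
    obtain ⟨w₁, ⟨hw₁, h₁⟩, w₂, ⟨hw₂, h₂⟩, hne⟩ := Set.not_subsingleton_iff.mp hsub
    by_cases hρ₁ : ρ ∈ c.branch w₁
    · have hρ₂ : ρ ∉ c.branch w₂ :=
        Set.disjoint_left.mp (hG.2.disjoint_branch hc hw₁ hw₂ hne) hρ₁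
      exact ⟨w₂, hw₂, h₂.resolve_right hρ₂, hρ₂⟩
    · exact ⟨w₁, hw₁, h₁.resolve_right hρ₁, hρ₁⟩
  have hxT : x ∈ c.branch x := Walk.mem_branch_self
  obtain ⟨t, hxt, htc⟩ := hG.2.exists_adj_notMem_support hc hx hx3
  have htT : t ∈ c.branch x := ⟨hxt.symm.toWalk, by simp [htc]⟩
  have : Nontrivial (c.branch x) := ⟨⟨⟨x, hxT⟩, ⟨t, htT⟩, by simpa using hxt.ne⟩⟩
  obtain ⟨y, hy, hyx⟩ := hc.exists_mem_support_ne x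
  have hcard : Nat.card (c.branch x) < n :=
    hn ▸ Finite.card_subtype_lt fun hyT => hyx (Walk.eq_of_mem_branch hyT hy)
  refine HasEndBlockAvoiding.of_induce hxT
    (fun v hv hvx u hu => hG.2.mem_branch_of_adj hc hx hv hvx hu) (fun h => absurd h hρx) ?_
  exact ih _ hcard ⟨Walk.induce_branch_connected, hG.2.comap (Embedding.induce _)⟩ _ rfl

end EndBlocks

def IsPrunable {V : Type*} (G : SimpleGraph V) (v : V) : Prop :=
  vdeg G v ≤ 1 ∨ ∃ (a z : V) (c : G.Walk a a), IsEndCycle G c z ∧ v ∈ c.support ∧ v ≠ z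

def IsAutInvariant {V : Type*} (G : SimpleGraph V) (S : Set V) : Prop :=
  ∀ π : G ≃g G, ∀ v, v ∈ S ↔ π v ∈ S

def IsVertexEdgeOrCycle {V : Type*} (G : SimpleGraph V) (S : Set V) : Prop :=
  (∃ v, S = {v}) ∨ (∃ u v, G.Adj u v ∧ S = {u, v}) ∨
    ∃ (a : V) (c : G.Walk a a), c.IsCycle ∧ S = {v | v ∈ c.support}

section Pruning

variable {V V' : Type*} {G : SimpleGraph V} {G' : SimpleGraph V'}

lemma IsEndCycle.map {a z : V} {c : G.Walk a a} (π : G ≃g G') (h : IsEndCycle G c z) :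
    IsEndCycle G' (c.map π.toHom) (π z) := by
  refine ⟨h.1.map π.injective, ?_⟩
  simp only [Walk.support_map, List.mem_map]
  rintro _ ⟨w, hw, rfl⟩ hwz
  exact (π.vdeg_apply w).trans (h.2 w hw fun h => hwz (congrArg _ h))

lemma IsPrunable.map {v : V} (π : G ≃g G') (h : IsPrunable G v) : IsPrunable G' (π v) := by
  rcases h with h | ⟨a, z, c, hc, hv, hvz⟩
  · exact .inl ((π.vdeg_apply v).trans_le h)
  · exact .inr ⟨π a, π z, _, hc.map π, Walk.support_map _ _ ▸ List.mem_map_of_mem hv,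
      π.injective.ne hvz⟩

lemma isAutInvariant_setOf_not_isPrunable : IsAutInvariant G {v | ¬IsPrunable G v} :=
  fun π v => not_congr ⟨fun h => h.map π, fun h => by simpa using h.map π.symm⟩

lemma IsEndCycle.mem_or_eq_of_adj [Finite V] {a z w u : V} {c : G.Walk a a}
    (h : IsEndCycle G c z) (hw : w ∈ c.support) (hwz : w ≠ z) (hwu : G.Adj w u) :
    (u ∈ c.support ∧ u ≠ z) ∨ u = z := by
  have hu : u ∈ c.support := h.1.neighborSet_subset_of_vdeg_eq_two hw (h.2 w hw hwz) hwu
  by_cases huz : u = z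
  exacts [.inr huz, .inl ⟨hu, huz⟩]

/-- A vertex of an end cycle other than its attachment vertex `z` can only be entered and left
through `z`, which a path visits once. -/
lemma SimpleGraph.Walk.IsPath.not_isPrunable [Finite V] {u v w : V} {p : G.Walk u w}
    (hp : p.IsPath) (hu : ¬IsPrunable G u) (hw : ¬IsPrunable G w) (hv : v ∈ p.support) :
    ¬IsPrunable G v := by
  classical
  rintro (hdeg | ⟨a, z, c, hcz, hvc, hvz⟩)
  · have hvu : v ≠ u := by rintro rfl; exact hu (.inl hdeg)
    have hvw : v ≠ w := by rintro rfl; exact hw (.inl hdeg)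
    have := hp.two_le_vdeg hv hvu hvw
    omega
  · have hD : ∀ x ∈ {x | x ∈ c.support ∧ x ≠ z}, ∀ y, G.Adj x y →
        y ∈ {x | x ∈ c.support ∧ x ≠ z} ∨ y = z := fun x hx y hxy =>
      hcz.mem_or_eq_of_adj hx.1 hx.2 hxy
    have hout : ∀ {x}, ¬IsPrunable G x → x ∉ {x | x ∈ c.support ∧ x ≠ z} :=
      fun hx hxD => hx (.inr ⟨a, z, c, hcz, hxD⟩)
    have hz₁ := (p.takeUntil v hv).reverse.mem_support_of_mem_of_notMem hD ⟨hvc, hvz⟩ (hout hu)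
    have hz₂ := (p.dropUntil v hv).mem_support_of_mem_of_notMem hD ⟨hvc, hvz⟩ (hout hw)
    rw [Walk.support_reverse, List.mem_reverse] at hz₁
    exact hvz (hp.eq_of_mem_support_takeUntil_of_mem_support_dropUntil hv hz₁ hz₂).symm

lemma IsCactus.exists_isPrunable [Finite V] [Nontrivial V] (hG : IsCactus G) :
    ∃ v, IsPrunable G v := by
  obtain ⟨ρ⟩ := hG.1.nonempty
  rcases hG.hasEndBlockAvoiding ρ with ⟨v, -, hv⟩ | ⟨a, z, c, hcz, -⟩
  · exact ⟨v, .inl hv⟩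
  · obtain ⟨w, hw, hwz⟩ := hcz.1.exists_mem_support_ne z
    exact ⟨w, .inr ⟨a, z, c, hcz, hw, hwz⟩⟩

lemma isVertexEdgeOrCycle_univ_of_forall_isPrunable [Finite V] (hG : G.Connected)
    (h : ∀ v, IsPrunable G v) : IsVertexEdgeOrCycle G Set.univ := by
  by_cases hleaf : ∃ v, vdeg G v ≤ 1
  · obtain ⟨v, hv⟩ := hleaf
    by_cases hs : ∃ s, G.Adj v s
    · obtain ⟨s, hvs⟩ := hs
      rcases h s with hs1 | ⟨a, z, c, hcz, hsc, hsz⟩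
      · refine .inr (.inl ⟨v, s, hvs, (hG.preconnected.eq_univ_of_adj_closed
          (Set.mem_insert v {s}) ?_).symm⟩)
        rintro w (rfl | rfl) u hwu
        · exact .inr ((neighborSet_eq_singleton_of_vdeg_le_one hv hvs).subset hwu)
        · exact .inl ((neighborSet_eq_singleton_of_vdeg_le_one hs1 hvs.symm).subset hwu)
      · have hvc := hcz.1.neighborSet_subset_of_vdeg_eq_two hsc (hcz.2 s hsc hsz) hvs.symm
        have := hcz.1.two_le_vdeg hvc
        omega
    · push Not at hs
      refine .inl ⟨v, (hG.preconnected.eq_univ_of_adj_closed (Set.mem_singleton v) ?_).symm⟩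
      rintro w rfl u hwu
      exact absurd hwu (hs u)
  · push Not at hleaf
    obtain ⟨v⟩ := hG.nonempty
    obtain ⟨a, z, c, hcz, -, -⟩ := (h v).resolve_left (hleaf v).not_ge
    have hdeg : ∀ w ∈ c.support, vdeg G w = 2 := by
      intro w hw
      by_cases hwz : w = z
      · obtain ⟨_, _, c', hcz', hwc', hwz'⟩ := (h w).resolve_left (hleaf w).not_ge
        exact hcz'.2 w hwc' hwz'
      · exact hcz.2 w hw hwz
    refine .inr (.inr ⟨a, c, hcz.1, (hG.preconnected.eq_univ_of_adj_closed
      c.start_mem_support fun w hw => ?_).symm⟩)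
    exact fun u hwu => hcz.1.neighborSet_subset_of_vdeg_eq_two hw (hdeg w hw) hwu

lemma IsVertexEdgeOrCycle.image {S : Set V'} (f : G' ↪g G) (h : IsVertexEdgeOrCycle G' S) :
    IsVertexEdgeOrCycle G (f '' S) := by
  rcases h with ⟨v, rfl⟩ | ⟨u, v, huv, rfl⟩ | ⟨a, c, hc, rfl⟩
  · exact .inl ⟨f v, Set.image_singleton⟩
  · exact .inr (.inl ⟨f u, f v, f.map_adj_iff.mpr huv, Set.image_pair _ _ _⟩)
  · refine .inr (.inr ⟨f a, c.map f.toHom, hc.map f.injective, ?_⟩)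
    ext v
    simp [Walk.support_map]

lemma IsAutInvariant.image_val {W : Set V} (hW : IsAutInvariant G W) {S : Set W}
    (hS : IsAutInvariant (G.induce W) S) : IsAutInvariant G (Subtype.val '' S) := by
  intro π v
  have hπ : Set.BijOn π W W :=
    ⟨fun w hw => (hW π w).mp hw, π.injective.injOn,
      fun w hw => ⟨π.symm w, (hW π _).mpr (by simpa using hw), by simp⟩⟩
  by_cases hv : v ∈ W
  · simpa [hv, (hW π v).mp hv, Set.MapsTo.restrict, Subtype.map] using hS (π.induce hπ) ⟨v, hv⟩
  · have hπv : π v ∉ W := fun h => hv ((hW π v).mpr h)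
    simp [hv, hπv]

theorem IsCactus.exists_isVertexEdgeOrCycle_isAutInvariant [Finite V] (hG : IsCactus G) :
    ∃ S, IsVertexEdgeOrCycle G S ∧ IsAutInvariant G S := by
  induction hn : Nat.card V using Nat.strong_induction_on generalizing V with
  | _ n ih =>
  by_cases hall : ∀ v, IsPrunable G v
  · exact ⟨Set.univ, isVertexEdgeOrCycle_univ_of_forall_isPrunable hG.1 hall,
      by simp [IsAutInvariant]⟩
  push Not at hall
  obtain ⟨w₀, hw₀⟩ := hall
  set W := {v | ¬IsPrunable G v}
  have : Nontrivial V := by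
    refine not_subsingleton_iff_nontrivial.mp fun _ => hw₀ (.inl ?_)
    simp [vdeg]
  obtain ⟨r, hr⟩ := hG.exists_isPrunable
  have hWconn : (G.induce W).Connected := by
    refine induce_connected_of_forall_exists_walk hw₀ fun v hv => ?_
    obtain ⟨p, hp⟩ := hG.1.exists_isPath v w₀
    exact ⟨p, fun w hw => hp.not_isPrunable hv hw₀ hw⟩
  obtain ⟨S, hS, hSinv⟩ := ih _ (hn ▸ Finite.card_subtype_lt (not_not.mpr hr))
    ⟨hWconn, hG.2.comap (Embedding.induce W)⟩ rfl
  exact ⟨_, hS.image (Embedding.induce W), isAutInvariant_setOf_not_isPrunable.image_val hSinv⟩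

end Pruning

/-- Every cactus graph has a set `S` of vertices such that the induced
subgraph `H[S]` is a single vertex, a single edge, or a cycle, and `S` is fixed
setwise by every automorphism. -/
theorem cactus_fixed_centre {V : Type*} [Fintype V]
    (G : SimpleGraph V) (hcactus : IsCactus G) :
    ∃ S : Set V,
      ((∃ v : V, S = {v}) ∨
        (∃ u v : V, G.Adj u v ∧ S = {u, v}) ∨
        (∃ (a : V) (c : G.Walk a a), c.IsCycle ∧ S = {v | v ∈ c.support} ∧
          ∀ u ∈ S, ∀ v ∈ S, (G.Adj u v ↔ s(u, v) ∈ c.edges))) ∧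
      ∀ π : G ≃g G, ∀ v : V, v ∈ S ↔ π v ∈ S := by
  obtain ⟨S, hS, hinv⟩ := hcactus.exists_isVertexEdgeOrCycle_isAutInvariant
  refine ⟨S, ?_, hinv⟩
  rcases hS with h | h | ⟨a, c, hc, rfl⟩
  · exact .inl h
  · exact .inr (.inl h)
  · exact .inr (.inr ⟨a, c, hc, rfl, fun u hu v hv => hcactus.2.adj_iff_mem_edges hc hu hv⟩)
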